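/- arXiv:1801.09591 — 4 statements merged into one kernel-verified Lean document; each statement's English description precedes it below -/
import Mathlib

section
/- Let (G,+) be an abelian group and let A, B ⊆ G be finite sets with |A + A| ≤ C₁|A| and |B + B| ≤ C₂|B|. Suppose there exists a set G₀ ⊆ A × B with |G₀| ≥ |A||B|/C₃ such that the image of G₀ under the map π₁(x,y) = x + y has cardinality at most C₄|A|. Then |A + B| ≤ C₁C₂C₃C₄|A|. -/
open Finset Pointwise

/-
Pick the most popular sum `s` of the graph `G₀`: by pigeonhole, its fibre `P` has at least
`|G₀| / |π₁(G₀)| ≥ |B| / (C₃ C₄)` elements. If `c = x_c + y_c` with `x_c ∈ A`, `y_c ∈ B`, then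
`(c, (a, b)) ↦ (x_c + a, y_c + b)` injects `(A + B) × P` into `(A + A) × (B + B)`, because the two
coordinates add up to `c + s`. Hence `|A + B| |P| ≤ C₁ C₂ |A| |B|`.
-/

namespace Finset

variable {α β : Type*} [DecidableEq β]

lemma exists_card_le_card_image_mul_card_fiber (s : Finset α) (f : α → β) (hs : s.Nonempty) :
    ∃ y ∈ s.image f, #s ≤ #(s.image f) * #{x ∈ s | f x = y} := by
  have himage : (0 : ℚ) < #(s.image f) := by exact_mod_cast (hs.image f).card_pos
  obtain ⟨y, hy, hfiber⟩ := exists_le_card_fiber_of_nsmul_le_card_of_maps_to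
    (fun a ha => mem_image_of_mem f ha) (hs.image f) (b := (#s : ℚ) / #(s.image f))
    (by rw [nsmul_eq_mul, mul_div_cancel₀ _ himage.ne'])
  refine ⟨y, hy, ?_⟩
  rw [div_le_iff₀' himage] at hfiber
  exact_mod_cast hfiber

end Finset

section Sumset

variable {G : Type*} [AddCommGroup G] [DecidableEq G]

lemma card_add_mul_card_le_of_forall_add_eq {A B A' B' : Finset G} {P : Finset (G × G)} {s : G}
    (hP : P ⊆ A' ×ˢ B') (hs : ∀ p ∈ P, p.1 + p.2 = s) :
    #(A + B) * #P ≤ #(A + A') * #(B + B') := by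
  have hrep : ∀ c ∈ A + B, ∃ p : G × G, p.1 ∈ A ∧ p.2 ∈ B ∧ p.1 + p.2 = c := by
    intro c hc
    obtain ⟨x, hx, y, hy, rfl⟩ := mem_add.1 hc
    exact ⟨(x, y), hx, hy, rfl⟩
  choose! r hrA hrB hr using hrep
  rw [← card_product, ← card_product]
  refine card_le_card_of_injOn (fun q => ((r q.1).1 + q.2.1, (r q.1).2 + q.2.2)) ?_ ?_
  · rintro ⟨c, p⟩ hq
    obtain ⟨hc, hp⟩ := mem_product.1 hq
    obtain ⟨ha, hb⟩ := mem_product.1 (hP hp)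
    exact mem_product.2 ⟨add_mem_add (hrA c hc) ha, add_mem_add (hrB c hc) hb⟩
  · rintro ⟨c, a, b⟩ hq ⟨c', a', b'⟩ hq' heq
    simp only [coe_product, Set.mem_prod, mem_coe] at hq hq'
    obtain ⟨hc, hp⟩ := hq
    obtain ⟨hc', hp'⟩ := hq'
    simp only [Prod.mk.injEq] at heq
    obtain ⟨e₁, e₂⟩ := heq
    have hab : a + b = s := hs _ hp
    have hab' : a' + b' = s := hs _ hp'
    have hcc : c = c' := add_right_cancel (b := s) <| calc
      c + s = ((r c).1 + a) + ((r c).2 + b) := by rw [add_add_add_comm, hr c hc, hab]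
      _ = ((r c').1 + a') + ((r c').2 + b') := by rw [e₁, e₂]
      _ = c' + s := by rw [add_add_add_comm, hr c' hc', hab']
    subst hcc
    rw [add_left_cancel e₁, add_left_cancel e₂]

end Sumset

theorem sumset_growth_of_popular_graph_general
    {G : Type*} [AddCommGroup G] [DecidableEq G]
    (A B : Finset G) (hA : A.Nonempty) (hB : B.Nonempty)
    (C₁ C₂ C₃ C₄ : ℝ) (hC₁ : 0 < C₁) (hC₂ : 0 < C₂) (hC₃ : 0 < C₃)
    (h₁ : ((A + A).card : ℝ) ≤ C₁ * A.card)
    (h₂ : ((B + B).card : ℝ) ≤ C₂ * B.card)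
    (G₀ : Finset (G × G)) (hG₀ : G₀ ⊆ A ×ˢ B)
    (hG₀card : ((A.card : ℝ) * B.card) / C₃ ≤ G₀.card)
    (hπ : ((G₀.image (fun q => q.1 + q.2)).card : ℝ) ≤ C₄ * A.card) :
    ((A + B).card : ℝ) ≤ C₁ * C₂ * C₃ * C₄ * A.card := by
  have hAB : (0 : ℝ) < #A * #B := by
    have := hA.card_pos; have := hB.card_pos; positivity
  have hG₀ne : G₀.Nonempty := card_pos.1 (by exact_mod_cast (div_pos hAB hC₃).trans_le hG₀card)
  obtain ⟨s, -, hpopular⟩ := G₀.exists_card_le_card_image_mul_card_fiber (fun q => q.1 + q.2) hG₀ne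
  set P := G₀.filter fun q => q.1 + q.2 = s
  have hsumset : (#(A + B) : ℝ) * #P ≤ #(A + A) * #(B + B) := by
    exact_mod_cast card_add_mul_card_le_of_forall_add_eq (A := A) (B := B)
      ((filter_subset _ _).trans hG₀) fun p hp => (mem_filter.1 hp).2
  have hpopularR : (#G₀ : ℝ) ≤ #(G₀.image fun q => q.1 + q.2) * #P := by exact_mod_cast hpopular
  have hP : (0 : ℝ) < #P := by
    exact_mod_cast Nat.pos_of_mul_pos_left (hG₀ne.card_pos.trans_le hpopular)
  refine le_of_mul_le_mul_right ?_ hP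
  calc (#(A + B) : ℝ) * #P ≤ #(A + A) * #(B + B) := hsumset
    _ ≤ (C₁ * #A) * (C₂ * #B) := by gcongr
    _ = C₁ * C₂ * (#A * #B) := by ring
    _ ≤ C₁ * C₂ * (C₃ * #G₀) := by gcongr C₁ * C₂ * ?_; exact (div_le_iff₀' hC₃).1 hG₀card
    _ ≤ C₁ * C₂ * (C₃ * (C₄ * #A * #P)) := by gcongr; exact hpopularR.trans (by gcongr)
    _ = C₁ * C₂ * C₃ * C₄ * #A * #P := by ring

theorem sumset_growth_of_popular_graph
    {G : Type*} [AddCommGroup G] [DecidableEq G]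
    (A B : Finset G) (hA : A.Nonempty) (hB : B.Nonempty)
    (C₁ C₂ C₃ C₄ : ℝ) (hC₁ : 0 < C₁) (hC₂ : 0 < C₂) (hC₃ : 0 < C₃) (hC₄ : 0 < C₄)
    (h₁ : ((A + A).card : ℝ) ≤ C₁ * A.card)
    (h₂ : ((B + B).card : ℝ) ≤ C₂ * B.card)
    (G₀ : Finset (G × G)) (hG₀ : G₀ ⊆ A ×ˢ B)
    (hG₀card : ((A.card : ℝ) * B.card) / C₃ ≤ G₀.card)
    (hπ : ((G₀.image (fun q => q.1 + q.2)).card : ℝ) ≤ C₄ * A.card) :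
    ((A + B).card : ℝ) ≤ C₁ * C₂ * C₃ * C₄ * A.card :=
  sumset_growth_of_popular_graph_general A B hA hB C₁ C₂ C₃ C₄ hC₁ hC₂ hC₃ h₁ h₂ G₀ hG₀ hG₀card hπ
end

section
/- Let G be an abelian group, A, B finite nonempty subsets, and t₁, …, t_k group endomorphism parameters (here scalars in a field) such that |A + t_iB| ≤ K|A| for all i. Then |(t₁B + … + t_kB) − (t₁B + … + t_kB)| ≤ C_k K^{2k} |A| for a constant C_k depending only on k. -/
/-! All dilates `t i • B` lie in their union `D`, so `∑ i, t i • B ⊆ k • D`, while a union bound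
gives `|A + D| ≤ k K |A|`. The Plünnecke–Ruzsa inequality for `A` and the single set `D` then yields
`|k • D - k • D| ≤ (k K) ^ (2k) |A|`, so `C = (k + 1) ^ (2k)` works. -/

open Finset Pointwise

namespace Finset

lemma add_biUnion {G ι : Type*} [Add G] [DecidableEq G] (A : Finset G) (s : Finset ι)
    (f : ι → Finset G) : A + s.biUnion f = s.biUnion fun i ↦ A + f i := by
  ext x
  simp only [mem_add, mem_biUnion]
  aesop

lemma sum_subset_card_nsmul {G ι : Type*} [AddCommMonoid G] [DecidableEq G] {s : Finset ι}
    {f : ι → Finset G} {D : Finset G} (h : ∀ i ∈ s, f i ⊆ D) : ∑ i ∈ s, f i ⊆ #s • D := by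
  classical
  induction s using Finset.induction_on with
  | empty => simp
  | insert a s ha ih =>
    rw [sum_insert ha, card_insert_of_notMem ha, succ_nsmul']
    exact add_subset_add (h a (mem_insert_self a s)) (ih fun i hi ↦ h i (mem_insert_of_mem hi))

lemma card_nsmul_sub_nsmul_le {G : Type*} [AddCommGroup G] [DecidableEq G] {A D : Finset G}
    {L : ℝ} (hA : A.Nonempty) (hAD : (#(A + D) : ℝ) ≤ L * #A) (m n : ℕ) :
    (#(m • D - n • D) : ℝ) ≤ L ^ (m + n) * #A := by
  have hA₀ : (0 : ℝ) < #A := by exact_mod_cast hA.card_pos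
  have hPR : (#(m • D - n • D) : ℝ) ≤ (#(A + D) / #A : ℝ) ^ (m + n) * #A := by
    simpa using NNRat.cast_le (K := ℝ) |>.2 <|
      pluennecke_ruzsa_inequality_nsmul_sub_nsmul_add hA D m n
  exact hPR.trans (by gcongr; rwa [div_le_iff₀ hA₀])

end Finset

theorem plunnecke_different_summands (k : ℕ) :
    ∃ C : ℝ, 0 < C ∧ ∀ (F : Type) (_ : Field F) (_ : DecidableEq F)
      (A B : Finset F) (t : Fin k → F) (K : ℝ),
      A.Nonempty → B.Nonempty →
      (∀ i, ((A + t i • B).card : ℝ) ≤ K * A.card) →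
      (((∑ i, t i • B) - (∑ i, t i • B)).card : ℝ) ≤ C * K ^ (2 * k) * A.card := by
  refine ⟨((k : ℝ) + 1) ^ (2 * k), by positivity, fun F _ _ A B t K hA _ hK ↦ ?_⟩
  set D := univ.biUnion fun i ↦ t i • B
  have hsum : ∑ i, t i • B ⊆ k • D := by
    simpa using sum_subset_card_nsmul (s := univ) fun i _ ↦
      subset_biUnion_of_mem (fun j ↦ t j • B) (mem_univ i)
  have hAD : (#(A + D) : ℝ) ≤ k * K * #A :=
    calc (#(A + D) : ℝ) ≤ ∑ i, (#(A + t i • B) : ℝ) := by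
          rw [add_biUnion]; exact_mod_cast card_biUnion_le
      _ ≤ ∑ _i : Fin k, K * #A := sum_le_sum fun i _ ↦ hK i
      _ = k * K * #A := by simp [mul_assoc]
  calc (#((∑ i, t i • B) - ∑ i, t i • B) : ℝ) ≤ #(k • D - k • D) := by
        exact_mod_cast card_le_card (sub_subset_sub hsum hsum)
    _ ≤ (k * K) ^ (2 * k) * #A := by simpa [two_mul] using card_nsmul_sub_nsmul_le hA hAD k k
    _ ≤ ((k : ℝ) + 1) ^ (2 * k) * K ^ (2 * k) * #A := by
        rw [mul_pow]
        gcongr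
        · exact (even_two_mul k).pow_nonneg K
        · linarith
end

section
/- Popularity/Cauchy–Schwarz lemma: Let P be a finite set and P_b ⊆ P for b in a finite index set B, with |P_b| ≥ δ|P| for all b ∈ B and δ ∈ (0,1]. Then there exists b₀ ∈ B and a subset B' ⊆ B with |B'| ≥ δ²|B|/2 such that |P_b ∩ P_{b₀}| ≥ (δ²/2)|P| for all b ∈ B'. -/
open Finset

theorem popularity_lemma {α β : Type*} [DecidableEq α] [DecidableEq β]
    (P : Finset α) (B : Finset β) (hB : B.Nonempty)
    (f : β → Finset α) (hfP : ∀ b ∈ B, f b ⊆ P)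
    (δ : ℝ) (hδ : δ ∈ Set.Ioc (0:ℝ) 1)
    (hdense : ∀ b ∈ B, δ * P.card ≤ ((f b).card : ℝ)) :
    ∃ b₀ ∈ B, ∃ B' ⊆ B, δ ^ 2 * B.card / 2 ≤ (B'.card : ℝ) ∧
      ∀ b ∈ B', δ ^ 2 / 2 * P.card ≤ ((f b ∩ f b₀).card : ℝ) := by
  classical
  obtain ⟨hδ0, hδ1⟩ := hδ
  have hδ2 : δ ^ 2 ≤ 1 := by nlinarith
  rcases Finset.eq_empty_or_nonempty P with hP | hP
  · obtain ⟨b₀, hb₀⟩ := hB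
    refine ⟨b₀, hb₀, B, Finset.Subset.refl _, ?_, ?_⟩
    · have hBc : (0:ℝ) ≤ B.card := by positivity
      nlinarith
    · intro b hb
      simp [hP]
  have hPc : (0:ℝ) < P.card := by exact_mod_cast Finset.card_pos.mpr hP
  have hBc : (0:ℝ) < B.card := by exact_mod_cast Finset.card_pos.mpr hB
  set deg : α → ℝ := fun p => ((B.filter (fun b => p ∈ f b)).card : ℝ) with hdeg
  -- indicator representation of card
  have hcard : ∀ S : Finset α, S ⊆ P → ((S.card : ℝ)) = ∑ p ∈ P, (if p ∈ S then (1:ℝ) else 0) := by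
    intro S hS
    rw [Finset.sum_boole]
    congr 1
    rw [Finset.filter_mem_eq_inter, Finset.inter_eq_right.mpr hS]
  -- S1 : sum of cards = sum of degrees
  have hS1 : ∑ b ∈ B, ((f b).card : ℝ) = ∑ p ∈ P, deg p := by
    rw [Finset.sum_congr rfl (fun b hb => hcard _ (hfP b hb)), Finset.sum_comm]
    refine Finset.sum_congr rfl fun p _ => ?_
    rw [hdeg, Finset.sum_boole]
  -- S2 : double sum of intersection cards = sum of deg^2
  have hinter : ∀ b₀ ∈ B, ∀ b ∈ B,
      ((f b ∩ f b₀).card : ℝ) = ∑ p ∈ P, (if p ∈ f b then (1:ℝ) else 0) * (if p ∈ f b₀ then (1:ℝ) else 0) := by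
    intro b₀ hb₀ b hb
    have hsub : f b ∩ f b₀ ⊆ P := (Finset.inter_subset_left).trans (hfP b hb)
    rw [hcard _ hsub]
    refine Finset.sum_congr rfl fun p _ => ?_
    by_cases h1 : p ∈ f b <;> by_cases h2 : p ∈ f b₀ <;> simp [h1, h2]
  have hS2 : ∑ b₀ ∈ B, ∑ b ∈ B, ((f b ∩ f b₀).card : ℝ) = ∑ p ∈ P, (deg p) ^ 2 := by
    rw [Finset.sum_congr rfl (fun b₀ hb₀ => Finset.sum_congr rfl (fun b hb => hinter b₀ hb₀ b hb))]
    rw [Finset.sum_congr rfl (fun b₀ _ => Finset.sum_comm), Finset.sum_comm]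
    refine Finset.sum_congr rfl fun p _ => ?_
    rw [Finset.sum_comm, ← Finset.sum_mul_sum, hdeg]
    simp [Finset.sum_boole, sq, mul_comm]
  -- lower bound on sum of degrees
  have hA : δ * B.card * P.card ≤ ∑ p ∈ P, deg p := by
    rw [← hS1]
    calc δ * B.card * P.card = ∑ _b ∈ B, δ * P.card := by
          rw [Finset.sum_const, nsmul_eq_mul]; ring
    _ ≤ ∑ b ∈ B, ((f b).card : ℝ) := Finset.sum_le_sum hdense
  have hCS : (∑ p ∈ P, deg p) ^ 2 ≤ P.card * ∑ p ∈ P, (deg p) ^ 2 :=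
    sq_sum_le_card_mul_sum_sq
  have hApos : 0 ≤ δ * B.card * P.card := by positivity
  have hkey : δ ^ 2 * B.card ^ 2 * P.card ≤ ∑ b₀ ∈ B, ∑ b ∈ B, ((f b ∩ f b₀).card : ℝ) := by
    rw [hS2]
    have h1 : (δ * B.card * P.card) ^ 2 ≤ (∑ p ∈ P, deg p) ^ 2 :=
      pow_le_pow_left₀ hApos hA 2
    nlinarith [hCS]
  -- averaging: pick b₀
  obtain ⟨b₀, hb₀, hb₀sum⟩ : ∃ b₀ ∈ B, δ ^ 2 * B.card * P.card ≤ ∑ b ∈ B, ((f b ∩ f b₀).card : ℝ) := by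
    by_contra h
    push_neg at h
    have hlt : ∑ b₀ ∈ B, ∑ b ∈ B, ((f b ∩ f b₀).card : ℝ) < ∑ _b₀ ∈ B, δ ^ 2 * B.card * P.card :=
      Finset.sum_lt_sum_of_nonempty hB h
    rw [Finset.sum_const, nsmul_eq_mul] at hlt
    nlinarith [hkey.trans_lt hlt]
  set B' := B.filter (fun b => δ ^ 2 / 2 * P.card ≤ ((f b ∩ f b₀).card : ℝ)) with hB'
  refine ⟨b₀, hb₀, B', Finset.filter_subset _ _, ?_, ?_⟩
  · set C := B.filter (fun b => ¬ (δ ^ 2 / 2 * P.card ≤ ((f b ∩ f b₀).card : ℝ))) with hC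
    have hsplit : ∑ b ∈ B, ((f b ∩ f b₀).card : ℝ)
        = ∑ b ∈ B', ((f b ∩ f b₀).card : ℝ) + ∑ b ∈ C, ((f b ∩ f b₀).card : ℝ) :=
      (Finset.sum_filter_add_sum_filter_not B _ _).symm
    have hup1 : ∑ b ∈ B', ((f b ∩ f b₀).card : ℝ) ≤ B'.card * P.card := by
      calc ∑ b ∈ B', ((f b ∩ f b₀).card : ℝ) ≤ ∑ _b ∈ B', (P.card : ℝ) := by
            apply Finset.sum_le_sum
            intro b hb
            have hmem := Finset.mem_filter.mp hb
            have hsub : f b ∩ f b₀ ⊆ P := (Finset.inter_subset_left).trans (hfP b hmem.1)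
            exact_mod_cast Finset.card_le_card hsub
        _ = B'.card * P.card := by rw [Finset.sum_const, nsmul_eq_mul]
    have hup2 : ∑ b ∈ C, ((f b ∩ f b₀).card : ℝ) ≤ B.card * (δ ^ 2 / 2 * P.card) := by
      calc ∑ b ∈ C, ((f b ∩ f b₀).card : ℝ) ≤ ∑ _b ∈ C, (δ ^ 2 / 2 * P.card) := by
            apply Finset.sum_le_sum
            intro b hb
            exact le_of_lt (lt_of_not_ge (Finset.mem_filter.mp hb).2)
        _ = C.card * (δ ^ 2 / 2 * P.card) := by rw [Finset.sum_const, nsmul_eq_mul]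
        _ ≤ B.card * (δ ^ 2 / 2 * P.card) := by
            apply mul_le_mul_of_nonneg_right _ (by positivity)
            exact_mod_cast Finset.card_le_card (Finset.filter_subset _ _)
    have hfin : δ ^ 2 * B.card * P.card ≤ B'.card * P.card + B.card * (δ ^ 2 / 2 * P.card) := by
      calc δ ^ 2 * B.card * P.card ≤ ∑ b ∈ B, ((f b ∩ f b₀).card : ℝ) := hb₀sum
        _ = _ := hsplit
        _ ≤ _ := add_le_add hup1 hup2
    nlinarith
  · intro b hb
    exact (Finset.mem_filter.mp hb).2
end

section
/- Bourgain's sum-product lemma: Let p be prime and A, B ⊆ Z_p finite sets with (A − A) ∩ (B − B) ≠ {0}. Then there exist a subset B₁ ⊆ B, a subset Z ⊆ (A − A) ∩ (B − B), and elements a₁,…,a₆ ∈ A, b₁,…,b₆ ∈ B such that |(b₁−b₂)A + (a₁−a₂+a₃−a₄)B₁ + (a₅−a₆+b₃−b₄+b₅−b₆)Z| ≥ (1/2) min{|A||B|, p − 1}. -/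
/-!
Greedily choose `B₁ ⊆ B` whose nonzero differences avoid `A - A`, so that `A + B₁` is a perfect
sumset, and let `Z ⊆ (A - A) ∩ (B - B)` be the translate to `0` of a largest `(A - A)`-neighbourhood
in `B`; then `|A + B₁| |Z| ≥ |A| |B|`. Call `ξ` a slope if `ξ u ∈ (A + B₁) - (A + B₁)` for some
nonzero `u ∈ (B - B) ∩ ((A - A) - (A - A))`. If every `ξ` is a slope, Cauchy–Schwarz against the
additive energy, averaged over all nonzero dilates, gives a `ξ` with
`|A + B₁ + ξ Z| ≥ ½ min(|A + B₁| |Z|, p - 1)`. Otherwise, as `0` is a slope, some slope `ξ` has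
`ξ + 1` not a slope, and then `A + B₁ + (ξ + 1) Z` is a perfect sumset. In both cases the dilate
`u • (A + B₁ + ξ Z)` has the required shape.
-/

open Finset Pointwise
open scoped Combinatorics.Additive

theorem Finset.exists_rel_separated_subset_card_le {α : Type*} [DecidableEq α]
    (r : α → α → Prop) [DecidableRel r] (hrefl : ∀ a, r a a) (hsymm : ∀ a b, r a b → r b a)
    (m : ℕ) (B : Finset α) (hdeg : ∀ b ∈ B, #{b' ∈ B | r b b'} ≤ m) :
    ∃ B₁ ⊆ B, (∀ b ∈ B₁, ∀ b' ∈ B₁, r b b' → b = b') ∧ #B ≤ m * #B₁ := by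
  induction B using Finset.strongInduction with
  | H S ih =>
  rcases S.eq_empty_or_nonempty with rfl | ⟨b, hb⟩
  · exact ⟨∅, empty_subset _, by simp, by simp⟩
  set S' := {b' ∈ S | ¬ r b b'}
  have hS' : S' ⊂ S := filter_ssubset.2 ⟨b, hb, not_not.2 (hrefl b)⟩
  obtain ⟨B₁, hB₁S', hsep, hcard⟩ := ih S' hS' fun c hc =>
    (card_le_card (filter_subset_filter _ (filter_subset _ _))).trans
      (hdeg c (filter_subset _ _ hc))
  have hfar : ∀ c ∈ B₁, ¬ r b c := fun c hc => (mem_filter.1 (hB₁S' hc)).2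
  refine ⟨insert b B₁, insert_subset hb (hB₁S'.trans (filter_subset _ _)), ?_, ?_⟩
  · intro c hc c' hc' hcc'
    rw [mem_insert] at hc hc'
    rcases hc with hc | hc <;> rcases hc' with hc' | hc'
    · rw [hc, hc']
    · rw [hc] at hcc'; exact absurd hcc' (hfar _ hc')
    · rw [hc'] at hcc'; exact absurd (hsymm _ _ hcc') (hfar _ hc)
    · exact hsep c hc c' hc' hcc'
  · have hsplit : #{b' ∈ S | r b b'} + #S' = #S := card_filter_add_card_filter_not _
    have := hdeg b hb
    rw [card_insert_of_notMem fun h => hfar b h (hrefl b), mul_add_one]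
    omega

theorem Finset.exists_sub_separated_subset_and_common_differences {G : Type*} [AddCommGroup G]
    [DecidableEq G] (A B : Finset G) (hA : A.Nonempty) (hB : B.Nonempty) :
    ∃ B₁ ⊆ B, ∃ Z ⊆ (A - A) ∩ (B - B), Z - Z ⊆ B - B ∧
      (∀ b ∈ B₁, ∀ b' ∈ B₁, b - b' ∈ A - A → b = b') ∧ #B ≤ #Z * #B₁ := by
  obtain ⟨b₀, hb₀, hmax⟩ := exists_max_image B (fun b => #{b' ∈ B | b' - b ∈ A - A}) hB
  set Z := {b' ∈ B | b' - b₀ ∈ A - A}.image (· - b₀)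
  have hZ : #Z = #{b' ∈ B | b' - b₀ ∈ A - A} := card_image_of_injective _ sub_left_injective
  obtain ⟨B₁, hB₁, hsep, hcard⟩ := exists_rel_separated_subset_card_le
    (fun b b' => b' - b ∈ A - A) (fun b => by simpa using hA.zero_mem_sub)
    (fun b b' h => by simpa using neg_mem_neg h) #Z B (hZ ▸ hmax)
  refine ⟨B₁, hB₁, Z, fun t ht => ?_, fun x hx => ?_,
    fun b hb b' hb' h => (hsep b' hb' b hb h).symm, hcard⟩
  · obtain ⟨b, hb, rfl⟩ := mem_image.1 ht
    exact mem_inter.2 ⟨(mem_filter.1 hb).2, sub_mem_sub (mem_filter.1 hb).1 hb₀⟩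
  · obtain ⟨_, ht, _, ht', rfl⟩ := mem_sub.1 hx
    obtain ⟨b, hb, rfl⟩ := mem_image.1 ht
    obtain ⟨b', hb', rfl⟩ := mem_image.1 ht'
    rw [sub_sub_sub_cancel_right]
    exact sub_mem_sub (mem_filter.1 hb).1 (mem_filter.1 hb').1

theorem Finset.card_add_smul_finset_eq_mul {R : Type*} [Ring R] [DecidableEq R]
    (T Z : Finset R) (ξ : R) (h : ∀ t ∈ Z, ∀ t' ∈ Z, ξ * (t - t') ∈ T - T → t = t') :
    #(T + ξ • Z) = #T * #Z := by
  have hset : T + ξ • Z = image₂ (fun s t => s + ξ * t) T Z := by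
    rw [smul_finset_def, ← image₂_image_right]
    rfl
  rw [hset, card_image₂_iff]
  rintro ⟨s, t⟩ hst ⟨s', t'⟩ hst' heq
  simp only [Set.mem_prod, mem_coe] at hst hst' heq
  have hdiff : ξ * (t' - t) = s - s' := by
    rw [mul_sub, sub_eq_sub_iff_add_eq_add, add_comm]
    exact heq.symm
  have htt : t' = t := h t' hst'.2 t hst.2 (hdiff ▸ sub_mem_sub hst.1 hst'.1)
  subst htt
  simp_all

theorem Finset.addEnergy_smul_finset {K : Type*} [DivisionRing K] [DecidableEq K]
    (T Z : Finset K) {ξ : K} (hξ : ξ ≠ 0) :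
    E[T, ξ • Z] = #{x ∈ (T ×ˢ T) ×ˢ Z ×ˢ Z | x.1.1 + ξ * x.2.1 = x.1.2 + ξ * x.2.2} := by
  refine (card_nbij' (fun x => (x.1, ξ * x.2.1, ξ * x.2.2))
    (fun x => (x.1, ξ⁻¹ * x.2.1, ξ⁻¹ * x.2.2)) ?_ ?_ ?_ ?_).symm
  all_goals rintro ⟨⟨a, a'⟩, w, w'⟩; simp [mem_smul_finset, hξ]
  rintro ha ha' z hz rfl z' hz' rfl heq
  simp_all

section Energy

variable {K : Type*} [Field K] [DecidableEq K]

theorem Finset.card_filter_add_mul_eq_le_one {a a' z z' : K} (h : (a, z) ≠ (a', z'))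
    (s : Finset K) : #{ξ ∈ s | a + ξ * z = a' + ξ * z'} ≤ 1 := by
  refine card_le_one.2 fun ξ₁ h₁ ξ₂ h₂ => ?_
  rw [mem_filter] at h₁ h₂
  have hz : z - z' ≠ 0 := by
    rintro hz
    rw [sub_eq_zero] at hz
    subst hz
    exact h (by rw [add_right_cancel h₁.2])
  exact mul_right_cancel₀ hz (by linear_combination h₁.2 - h₂.2)

variable [Fintype K]

theorem Finset.sum_card_filter_add_mul_eq_le (T Z : Finset K) :
    ∑ ξ ∈ univ.erase 0, #{x ∈ (T ×ˢ T) ×ˢ Z ×ˢ Z | x.1.1 + ξ * x.2.1 = x.1.2 + ξ * x.2.2}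
      ≤ #T * #Z * (Fintype.card K - 1) + (#T * #Z) ^ 2 := by
  set Q := (T ×ˢ T) ×ˢ Z ×ˢ Z
  set D := {x ∈ Q | x.1.1 = x.1.2 ∧ x.2.1 = x.2.2}
  have hD : #D ≤ #T * #Z := by
    rw [← card_product]
    refine card_le_card_of_injOn (fun x => (x.1.1, x.2.1)) (fun x hx => ?_) fun x hx y hy hxy => ?_
    · simp_all [D, Q]
    · simp_all [D, Q, Prod.ext_iff]
  have hcount : ∀ x ∈ Q, #{ξ ∈ univ.erase 0 | x.1.1 + ξ * x.2.1 = x.1.2 + ξ * x.2.2}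
      ≤ (if x.1.1 = x.1.2 ∧ x.2.1 = x.2.2 then Fintype.card K - 1 else 0) + 1 := by
    intro x _
    split_ifs with hx
    · refine (card_filter_le _ _).trans ?_
      rw [card_erase_of_mem (mem_univ _), card_univ]
      omega
    · exact card_filter_add_mul_eq_le_one (by simpa [Prod.ext_iff, and_comm] using hx) _
  calc _ = ∑ x ∈ Q, #{ξ ∈ univ.erase 0 | x.1.1 + ξ * x.2.1 = x.1.2 + ξ * x.2.2} := by
        simp only [card_filter]
        exact sum_comm
    _ ≤ ∑ x ∈ Q, ((if x.1.1 = x.1.2 ∧ x.2.1 = x.2.2 then Fintype.card K - 1 else 0) + 1) :=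
        sum_le_sum hcount
    _ = #D * (Fintype.card K - 1) + #Q := by
        rw [sum_add_distrib, ← sum_filter, sum_const, sum_const, smul_eq_mul, smul_eq_mul, mul_one]
    _ ≤ #T * #Z * (Fintype.card K - 1) + (#T * #Z) ^ 2 := by
        simp only [Q, card_product]
        gcongr
        exact le_of_eq (by ring)

theorem Finset.exists_ne_zero_mul_addEnergy_smul_le (T Z : Finset K) :
    ∃ ξ ≠ (0 : K), (Fintype.card K - 1) * E[T, ξ • Z]
      ≤ #T * #Z * (Fintype.card K - 1) + (#T * #Z) ^ 2 := by
  obtain ⟨ξ, hξ, hle⟩ := exists_le_of_sum_le (s := univ.erase (0 : K)) ⟨1, by simp⟩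
    (f := fun ξ => (Fintype.card K - 1) * E[T, ξ • Z])
    (g := fun _ => #T * #Z * (Fintype.card K - 1) + (#T * #Z) ^ 2) <| by
      rw [← mul_sum, sum_const, card_erase_of_mem (mem_univ _), card_univ, smul_eq_mul]
      gcongr
      rw [sum_congr rfl fun ξ hξ => addEnergy_smul_finset T Z (ne_of_mem_erase hξ)]
      exact sum_card_filter_add_mul_eq_le T Z
  exact ⟨ξ, ne_of_mem_erase hξ, hle⟩

end Energy

theorem half_min_le_of_sq_le_mul {N P n E : ℝ} (hN : 0 ≤ N) (hP : 0 < P) (hn : 0 ≤ n)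
    (hCS : N ^ 2 ≤ n * E) (hE : P * E ≤ N * P + N ^ 2) : 1 / 2 * min N P ≤ n := by
  rcases hN.eq_or_lt with rfl | hN
  · simp [hP.le, hn]
  have hEpos : 0 < E := by
    by_contra! h
    nlinarith [mul_nonneg hn (neg_nonneg.2 h)]
  rcases le_total N P with hNP | hPN
  · have hE2 : E ≤ 2 * N := by nlinarith
    rw [min_eq_left hNP]
    nlinarith
  · have hE2 : P * E ≤ 2 * N ^ 2 := by nlinarith
    rw [min_eq_right hPN]
    nlinarith

theorem Finset.exists_ne_zero_half_min_le_card_add_smul {K : Type*} [Field K] [Fintype K]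
    [DecidableEq K] (T Z : Finset K) :
    ∃ ξ ≠ (0 : K), 1 / 2 * min ((#T : ℝ) * #Z) ((Fintype.card K : ℝ) - 1) ≤ #(T + ξ • Z) := by
  obtain ⟨ξ, hξ, hE⟩ := exists_ne_zero_mul_addEnergy_smul_le T Z
  have hCS := le_card_add_mul_addEnergy T (ξ • Z)
  rw [card_smul_finset₀ hξ, ← mul_pow] at hCS
  have hq : (0 : ℝ) < Fintype.card K - 1 := by
    rw [sub_pos, Nat.one_lt_cast]
    exact Fintype.one_lt_card
  refine ⟨ξ, hξ, half_min_le_of_sq_le_mul (E := E[T, ξ • Z]) (by positivity) hq (by positivity)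
    (by exact_mod_cast hCS) ?_⟩
  rw [← Nat.cast_pred Fintype.card_pos]
  exact_mod_cast hE

theorem ZMod.forall_of_zero_of_add_one {n : ℕ} [NeZero n] {P : ZMod n → Prop} (h0 : P 0)
    (hsucc : ∀ x, P x → P (x + 1)) (x : ZMod n) : P x := by
  rw [← natCast_zmod_val x]
  induction x.val with
  | zero => simpa using h0
  | succ k ih => simpa using hsucc _ ih

theorem ZMod.exists_slope_half_min_le_card_add_smul {p : ℕ} [Fact p.Prime]
    (T Z U : Finset (ZMod p)) (hT : T.Nonempty) (hU0 : 0 ∈ U) (hU : ∃ u ∈ U, u ≠ 0)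
    (hZU : ∀ t ∈ Z, ∀ t' ∈ Z, t ≠ t' → t - t' ∈ U) :
    ∃ ξ : ZMod p, ∃ u ∈ U, u ≠ 0 ∧ ξ * u ∈ T - T + U ∧
      1 / 2 * min ((#T : ℝ) * #Z) ((p : ℝ) - 1) ≤ #(T + ξ • Z) := by
  set IsSlope : ZMod p → Prop := fun ξ => ∃ u ∈ U, u ≠ 0 ∧ ξ * u ∈ T - T
  by_cases hall : ∀ ξ, IsSlope ξ
  · obtain ⟨ξ, -, hξ⟩ := exists_ne_zero_half_min_le_card_add_smul T Z
    obtain ⟨u, hu, hu0, hξu⟩ := hall ξ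
    rw [ZMod.card] at hξ
    exact ⟨ξ, u, hu, hu0, by simpa using add_mem_add hξu hU0, hξ⟩
  obtain ⟨ξ, ⟨u, hu, hu0, hξu⟩, hξ1⟩ : ∃ ξ, IsSlope ξ ∧ ¬ IsSlope (ξ + 1) := by
    by_contra! h
    obtain ⟨u, hu, hu0⟩ := hU
    exact hall (forall_of_zero_of_add_one ⟨u, hu, hu0, by simpa using hT.zero_mem_sub⟩ h)
  refine ⟨ξ + 1, u, hu, hu0, by rw [add_one_mul]; exact add_mem_add hξu hu, ?_⟩
  rw [card_add_smul_finset_eq_mul T Z (ξ + 1) fun t ht t' ht' h => by_contra fun htt =>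
    hξ1 ⟨t - t', hZU t ht t' ht' htt, sub_ne_zero.2 htt, h⟩]
  push_cast
  have := min_le_left ((#T : ℝ) * #Z) ((p : ℝ) - 1)
  have : (0 : ℝ) ≤ #T * #Z := by positivity
  linarith

theorem Finset.exists_coeffs_smul_add_smul_add_smul_eq {R : Type*} [CommRing R] [DecidableEq R]
    {A B B₁ : Finset R} (Z : Finset R) (hB₁ : B₁ ⊆ B) {u ξ : R} (huB : u ∈ B - B)
    (huA : u ∈ A - A - (A - A)) (hξu : ξ * u ∈ A + B₁ - (A + B₁) + (B - B)) :
    ∃ a₁ ∈ A, ∃ a₂ ∈ A, ∃ a₃ ∈ A, ∃ a₄ ∈ A, ∃ a₅ ∈ A, ∃ a₆ ∈ A,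
      ∃ b₁ ∈ B, ∃ b₂ ∈ B, ∃ b₃ ∈ B, ∃ b₄ ∈ B, ∃ b₅ ∈ B, ∃ b₆ ∈ B,
        (b₁ - b₂) • A + (a₁ - a₂ + a₃ - a₄) • B₁ + (a₅ - a₆ + b₃ - b₄ + b₅ - b₆) • Z
          = u • (A + B₁ + ξ • Z) := by
  obtain ⟨b₁, hb₁, b₂, hb₂, hb₁₂⟩ := mem_sub.1 huB
  obtain ⟨_, ha₁₂, _, ha₄₃, ha₁₄⟩ := mem_sub.1 huA
  obtain ⟨a₁, ha₁, a₂, ha₂, rfl⟩ := mem_sub.1 ha₁₂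
  obtain ⟨a₄, ha₄, a₃, ha₃, rfl⟩ := mem_sub.1 ha₄₃
  rw [add_sub_add_comm] at hξu
  obtain ⟨_, hab, _, hb₅₆, he⟩ := mem_add.1 hξu
  obtain ⟨_, ha₅₆, _, hb₃₄, rfl⟩ := mem_add.1 hab
  obtain ⟨a₅, ha₅, a₆, ha₆, rfl⟩ := mem_sub.1 ha₅₆
  obtain ⟨b₃, hb₃, b₄, hb₄, rfl⟩ := mem_sub.1 hb₃₄
  obtain ⟨b₅, hb₅, b₆, hb₆, rfl⟩ := mem_sub.1 hb₅₆
  refine ⟨a₁, ha₁, a₂, ha₂, a₃, ha₃, a₄, ha₄, a₅, ha₅, a₆, ha₆,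
    b₁, hb₁, b₂, hb₂, b₃, hB₁ hb₃, b₄, hB₁ hb₄, b₅, hb₅, b₆, hb₆, ?_⟩
  rw [smul_add, smul_add, smul_smul, hb₁₂, mul_comm, ← he, ← ha₁₄]
  congr 3 <;> ring

theorem bourgain_sum_product_lemma (p : ℕ) (hp : p.Prime)
    (A B : Finset (ZMod p))
    (hne : ∃ z : ZMod p, z ≠ 0 ∧ z ∈ (A - A) ∩ (B - B)) :
    ∃ B₁ ⊆ B, ∃ Z ⊆ (A - A) ∩ (B - B),
      ∃ a₁ ∈ A, ∃ a₂ ∈ A, ∃ a₃ ∈ A, ∃ a₄ ∈ A, ∃ a₅ ∈ A, ∃ a₆ ∈ A,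
      ∃ b₁ ∈ B, ∃ b₂ ∈ B, ∃ b₃ ∈ B, ∃ b₄ ∈ B, ∃ b₅ ∈ B, ∃ b₆ ∈ B,
        (1 / 2 : ℝ) * min ((A.card : ℝ) * B.card) ((p : ℝ) - 1) ≤
          ((((b₁ - b₂) • A + (a₁ - a₂ + a₃ - a₄) • B₁
              + (a₅ - a₆ + b₃ - b₄ + b₅ - b₆) • Z).card : ℕ) : ℝ) := by
  have := Fact.mk hp
  obtain ⟨z, hz0, hz⟩ := hne
  obtain ⟨hzA, hzB⟩ := mem_inter.1 hz
  have hA : A.Nonempty := Nonempty.of_sub_left ⟨z, hzA⟩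
  have hB : B.Nonempty := Nonempty.of_sub_left ⟨z, hzB⟩
  obtain ⟨B₁, hB₁, Z, hZ, hZZ, hsep, hcard⟩ :=
    exists_sub_separated_subset_and_common_differences A B hA hB
  have hAB₁ : #(A + B₁) = #A * #B₁ := by
    simpa using card_add_smul_finset_eq_mul A B₁ 1 (by simpa using hsep)
  have hB₁ne : B₁.Nonempty := card_pos.1 (Nat.pos_of_mul_pos_left (hB.card_pos.trans_le hcard))
  obtain ⟨ξ, u, hu, hu0, hξu, hbound⟩ := ZMod.exists_slope_half_min_le_card_add_smul
    (A + B₁) Z ((B - B) ∩ ((A - A) - (A - A))) (hA.add hB₁ne)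
    (mem_inter.2 ⟨hB.zero_mem_sub, by simpa using sub_mem_sub hA.zero_mem_sub hA.zero_mem_sub⟩)
    ⟨z, mem_inter.2 ⟨hzB, by simpa using sub_mem_sub hzA hA.zero_mem_sub⟩, hz0⟩
    fun t ht t' ht' _ => mem_inter.2 ⟨hZZ (sub_mem_sub ht ht'),
      sub_mem_sub (mem_inter.1 (hZ ht)).1 (mem_inter.1 (hZ ht')).1⟩
  obtain ⟨a₁, ha₁, a₂, ha₂, a₃, ha₃, a₄, ha₄, a₅, ha₅, a₆, ha₆, b₁, hb₁, b₂, hb₂, b₃, hb₃,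
    b₄, hb₄, b₅, hb₅, b₆, hb₆, hset⟩ := exists_coeffs_smul_add_smul_add_smul_eq Z hB₁
      (mem_inter.1 hu).1 (mem_inter.1 hu).2 (add_subset_add_left inter_subset_left hξu)
  refine ⟨B₁, hB₁, Z, hZ, a₁, ha₁, a₂, ha₂, a₃, ha₃, a₄, ha₄, a₅, ha₅, a₆, ha₆,
    b₁, hb₁, b₂, hb₂, b₃, hb₃, b₄, hb₄, b₅, hb₅, b₆, hb₆, ?_⟩
  have hAB : #A * #B ≤ #(A + B₁) * #Z := by
    rw [hAB₁, mul_assoc, mul_comm #B₁]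
    exact Nat.mul_le_mul_left _ hcard
  rw [hset, card_smul_finset₀ hu0]
  refine le_trans ?_ hbound
  gcongr (1 / 2 : ℝ) * min ?_ _
  exact_mod_cast hAB
end
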